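/- arXiv:1808.08073 — 6 statements merged into one kernel-verified Lean document; each statement's English description precedes it below -/
import Mathlib

section
/- Let f₀, f₁ : S^{n-1} → S^{k-1} be continuous maps, and suppose G : [0,1] × ℝⁿ → ℝᵏ is a proper continuous homotopy between Pf₀ and Pf₁ (where Pf(v) = ‖v‖ f(v/‖v‖), Pf(0)=0). Then f₀ and f₁ are homotopic as maps S^{n-1} → S^{k-1}. -/
/-- If `Pf₀` and `Pf₁` are properly homotopic, then `f₀` and `f₁` are homotopic
as maps `S^{n-1} → S^{k-1}`. -/
theorem stmt_5 (n k : ℕ) (hn : 1 ≤ n) (hk : 1 ≤ k)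
    (f₀ f₁ : Metric.sphere (0 : EuclideanSpace ℝ (Fin n)) 1 →
             Metric.sphere (0 : EuclideanSpace ℝ (Fin k)) 1)
    (hf₀ : Continuous f₀) (hf₁ : Continuous f₁)
    (Pf₀ Pf₁ : EuclideanSpace ℝ (Fin n) → EuclideanSpace ℝ (Fin k))
    (hPf₀0 : Pf₀ 0 = 0) (hPf₁0 : Pf₁ 0 = 0)
    (hPf₀ : ∀ v : EuclideanSpace ℝ (Fin n), ∀ h : v ≠ 0,
      Pf₀ v = ‖v‖ • (f₀ ⟨‖v‖⁻¹ • v, by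
        rw [mem_sphere_zero_iff_norm, norm_smul, norm_inv, norm_norm,
          inv_mul_cancel₀ (norm_ne_zero_iff.mpr h)]⟩ : EuclideanSpace ℝ (Fin k)))
    (hPf₁ : ∀ v : EuclideanSpace ℝ (Fin n), ∀ h : v ≠ 0,
      Pf₁ v = ‖v‖ • (f₁ ⟨‖v‖⁻¹ • v, by
        rw [mem_sphere_zero_iff_norm, norm_smul, norm_inv, norm_norm,
          inv_mul_cancel₀ (norm_ne_zero_iff.mpr h)]⟩ : EuclideanSpace ℝ (Fin k)))
    (G : unitInterval × EuclideanSpace ℝ (Fin n) → EuclideanSpace ℝ (Fin k))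
    (hGcont : Continuous G)
    (hGprop : ∀ K : Set (EuclideanSpace ℝ (Fin k)), IsCompact K → IsCompact (G ⁻¹' K))
    (hG0 : ∀ v, G (0, v) = Pf₀ v) (hG1 : ∀ v, G (1, v) = Pf₁ v) :
    ∃ H : unitInterval × Metric.sphere (0 : EuclideanSpace ℝ (Fin n)) 1 →
          Metric.sphere (0 : EuclideanSpace ℝ (Fin k)) 1,
      Continuous H ∧ (∀ x, H (0, x) = f₀ x) ∧ (∀ x, H (1, x) = f₁ x) := by
  obtain ⟨r, hr⟩ :=
    (((hGprop {0} isCompact_singleton).image continuous_snd).isBounded).subset_closedBall 0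
  set R : ℝ := |r| + 1 with hRdef
  have hRpos : 0 < R := by positivity
  have hnorm : ∀ x : Metric.sphere (0 : EuclideanSpace ℝ (Fin n)) 1,
      ‖R • (x : EuclideanSpace ℝ (Fin n))‖ = R := by
    intro x
    rw [norm_smul, mem_sphere_zero_iff_norm.mp x.2, mul_one, Real.norm_eq_abs,
      abs_of_pos hRpos]
  set g : unitInterval × Metric.sphere (0 : EuclideanSpace ℝ (Fin n)) 1 →
      EuclideanSpace ℝ (Fin k) :=
    fun p => G (p.1, R • (p.2 : EuclideanSpace ℝ (Fin n))) with hgdef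
  have hgne : ∀ p, g p ≠ 0 := by
    intro ⟨t, x⟩ h
    have hmem : R • (x : EuclideanSpace ℝ (Fin n)) ∈ Prod.snd '' (G ⁻¹' {0}) :=
      ⟨(t, R • (x : EuclideanSpace ℝ (Fin n))), h, rfl⟩
    have h1 := Metric.mem_closedBall.mp (hr hmem)
    rw [dist_zero_right, hnorm, hRdef] at h1
    linarith [le_abs_self r]
  have hgnorm : ∀ p, ‖g p‖ ≠ 0 := fun p => norm_ne_zero_iff.mpr (hgne p)
  refine ⟨fun p => ⟨‖g p‖⁻¹ • g p, by
      rw [mem_sphere_zero_iff_norm, norm_smul, norm_inv, norm_norm,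
        inv_mul_cancel₀ (hgnorm p)]⟩, ?_, ?_, ?_⟩
  · have hgcont : Continuous g := by
      apply hGcont.comp
      exact continuous_fst.prodMk ((continuous_subtype_val.comp continuous_snd).const_smul R)
    exact (((continuous_norm.comp hgcont).inv₀ hgnorm).smul hgcont).subtype_mk _
  · intro x
    have hxne : R • (x : EuclideanSpace ℝ (Fin n)) ≠ 0 := by
      rw [← norm_ne_zero_iff, hnorm]; exact hRpos.ne'
    have key : g (0, x) = R • (f₀ x : EuclideanSpace ℝ (Fin k)) := by
      rw [hgdef]
      simp only [hG0, hPf₀ _ hxne]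
      have hx : (⟨‖R • (x : EuclideanSpace ℝ (Fin n))‖⁻¹ • R • (x : EuclideanSpace ℝ (Fin n)),
          by rw [mem_sphere_zero_iff_norm, norm_smul, norm_inv, norm_norm,
            inv_mul_cancel₀ (norm_ne_zero_iff.mpr hxne)]⟩ :
          Metric.sphere (0 : EuclideanSpace ℝ (Fin n)) 1) = x := by
        apply Subtype.ext
        show ‖R • (x : EuclideanSpace ℝ (Fin n))‖⁻¹ • R • (x : EuclideanSpace ℝ (Fin n)) =
          (x : EuclideanSpace ℝ (Fin n))
        rw [hnorm, inv_smul_smul₀ hRpos.ne']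
      rw [hx, hnorm]
    apply Subtype.ext
    simp only [key]
    rw [norm_smul, Real.norm_eq_abs, abs_of_pos hRpos,
      mem_sphere_zero_iff_norm.mp (f₀ x).2, mul_one, inv_smul_smul₀ hRpos.ne']
  · intro x
    have hxne : R • (x : EuclideanSpace ℝ (Fin n)) ≠ 0 := by
      rw [← norm_ne_zero_iff, hnorm]; exact hRpos.ne'
    have key : g (1, x) = R • (f₁ x : EuclideanSpace ℝ (Fin k)) := by
      rw [hgdef]
      simp only [hG1, hPf₁ _ hxne]
      have hx : (⟨‖R • (x : EuclideanSpace ℝ (Fin n))‖⁻¹ • R • (x : EuclideanSpace ℝ (Fin n)),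
          by rw [mem_sphere_zero_iff_norm, norm_smul, norm_inv, norm_norm,
            inv_mul_cancel₀ (norm_ne_zero_iff.mpr hxne)]⟩ :
          Metric.sphere (0 : EuclideanSpace ℝ (Fin n)) 1) = x := by
        apply Subtype.ext
        show ‖R • (x : EuclideanSpace ℝ (Fin n))‖⁻¹ • R • (x : EuclideanSpace ℝ (Fin n)) =
          (x : EuclideanSpace ℝ (Fin n))
        rw [hnorm, inv_smul_smul₀ hRpos.ne']
      rw [hx, hnorm]
    apply Subtype.ext
    simp only [key]
    rw [norm_smul, Real.norm_eq_abs, abs_of_pos hRpos,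
      mem_sphere_zero_iff_norm.mp (f₁ x).2, mul_one, inv_smul_smul₀ hRpos.ne']
end

section
/- Let g₂ : ℝⁿ → ℝᵏ be a proper continuous map with ‖g₂(v)‖ = c(‖v‖) depending radially for ‖v‖ ≥ 1 in the sense that g₂(v) = ‖g₂(v)‖ · f(v/‖v‖) for ‖v‖ ≥ 1, where f : S^{n-1} → S^{k-1} is the restriction of g₂ to the unit sphere, and suppose g₂ maps the open unit ball into the open unit ball. Then the straight-line homotopy G₂(t,v) = (1-t)g₂(v) + t·Pf(v) is a proper map [0,1] × ℝⁿ → ℝᵏ, where Pf(v) = ‖v‖f(v/‖v‖). -/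
open Classical in
/-- If `g₂` is proper, radial outside the unit ball (with restriction `f` to the unit
sphere mapping into the unit sphere), and maps the open unit ball into the open unit
ball, then the straight-line homotopy from `g₂` to `Pf` is proper. -/
theorem stmt_9 (n k : ℕ)
    (g₂ : EuclideanSpace ℝ (Fin n) → EuclideanSpace ℝ (Fin k))
    (hg₂cont : Continuous g₂)
    (hg₂prop : ∀ K : Set (EuclideanSpace ℝ (Fin k)), IsCompact K →
      IsCompact (g₂ ⁻¹' K))
    (hsph : ∀ v : EuclideanSpace ℝ (Fin n), ‖v‖ = 1 → ‖g₂ v‖ = 1)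
    (hrad : ∀ v : EuclideanSpace ℝ (Fin n), 1 ≤ ‖v‖ →
      g₂ v = ‖g₂ v‖ • g₂ (‖v‖⁻¹ • v))
    (hball : ∀ v : EuclideanSpace ℝ (Fin n), ‖v‖ < 1 → ‖g₂ v‖ < 1) :
    Continuous (fun p : unitInterval × EuclideanSpace ℝ (Fin n) =>
      (1 - (p.1 : ℝ)) • g₂ p.2 +
        (p.1 : ℝ) • (if p.2 = 0 then 0 else ‖p.2‖ • g₂ (‖p.2‖⁻¹ • p.2))) ∧
    ∀ K : Set (EuclideanSpace ℝ (Fin k)), IsCompact K →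
      IsCompact ((fun p : unitInterval × EuclideanSpace ℝ (Fin n) =>
        (1 - (p.1 : ℝ)) • g₂ p.2 +
          (p.1 : ℝ) • (if p.2 = 0 then 0 else ‖p.2‖ • g₂ (‖p.2‖⁻¹ • p.2))) ⁻¹' K) := by
  set Pf : EuclideanSpace ℝ (Fin n) → EuclideanSpace ℝ (Fin k) :=
    fun v => if v = 0 then 0 else ‖v‖ • g₂ (‖v‖⁻¹ • v) with hPfdef
  have hunit : ∀ v : EuclideanSpace ℝ (Fin n), v ≠ 0 → ‖‖v‖⁻¹ • v‖ = 1 := by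
    intro v hv
    rw [norm_smul, norm_inv, norm_norm, inv_mul_cancel₀ (norm_ne_zero_iff.mpr hv)]
  have hPfnorm : ∀ v, ‖Pf v‖ = ‖v‖ := by
    intro v
    by_cases hv : v = 0
    · simp [hPfdef, hv]
    · simp [hPfdef, hv, norm_smul, hsph _ (hunit v hv)]
  have hPfcont : Continuous Pf := by
    rw [continuous_iff_continuousAt]
    intro v
    by_cases hv : v = 0
    · subst hv
      have h0 : Pf 0 = 0 := by simp [hPfdef]
      rw [ContinuousAt, h0]
      exact squeeze_zero_norm (fun x => (hPfnorm x).le) tendsto_norm_zero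
    · have hc : ContinuousAt (fun w : EuclideanSpace ℝ (Fin n) =>
          ‖w‖ • g₂ (‖w‖⁻¹ • w)) v := by
        exact (continuous_norm.continuousAt).smul
          (hg₂cont.continuousAt.comp
            (((continuous_norm.continuousAt.inv₀
              (norm_ne_zero_iff.mpr hv)).smul continuousAt_id)))
      refine hc.congr ?_
      filter_upwards [isOpen_ne.mem_nhds hv] with x hx
      simp [hPfdef, hx]
  have hG : Continuous (fun p : unitInterval × EuclideanSpace ℝ (Fin n) =>
      (1 - (p.1 : ℝ)) • g₂ p.2 + (p.1 : ℝ) • Pf p.2) := by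
    have ht : Continuous (fun p : unitInterval × EuclideanSpace ℝ (Fin n) => (p.1 : ℝ)) :=
      continuous_subtype_val.comp continuous_fst
    exact ((continuous_const.sub ht).smul (hg₂cont.comp continuous_snd)).add
      (ht.smul (hPfcont.comp continuous_snd))
  refine ⟨hG, ?_⟩
  intro K hK
  obtain ⟨R, hRK⟩ := hK.isBounded.subset_closedBall 0
  have hS : IsCompact (g₂ ⁻¹' Metric.closedBall 0 (2 * R)) :=
    hg₂prop _ (isCompact_closedBall 0 (2 * R))
  obtain ⟨M, hM⟩ := hS.isBounded.subset_closedBall 0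
  set B : ℝ := max 1 (max (2 * R) M) with hB
  have hsub : (fun p : unitInterval × EuclideanSpace ℝ (Fin n) =>
      (1 - (p.1 : ℝ)) • g₂ p.2 + (p.1 : ℝ) • Pf p.2) ⁻¹' K ⊆
      Set.univ ×ˢ Metric.closedBall 0 B := by
    rintro ⟨t, v⟩ hp
    simp only [Set.mem_preimage] at hp
    have hnorm : ‖(1 - (t : ℝ)) • g₂ v + (t : ℝ) • Pf v‖ ≤ R := by
      have := hRK hp
      rwa [Metric.mem_closedBall, dist_zero_right] at this
    constructor
    · trivial
    · rw [Metric.mem_closedBall, dist_zero_right]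
      by_cases hv1 : ‖v‖ < 1
      · exact hv1.le.trans (le_max_left _ _)
      push_neg at hv1
      have hv0 : v ≠ 0 := by
        intro h; rw [h, norm_zero] at hv1; linarith
      have ht0 : (0 : ℝ) ≤ t := t.2.1
      have ht1 : (t : ℝ) ≤ 1 := t.2.2
      have hc0 : (0 : ℝ) ≤ ‖g₂ v‖ := norm_nonneg _
      have hPfv : Pf v = ‖v‖ • g₂ (‖v‖⁻¹ • v) := by simp [hPfdef, hv0]
      have hkey : ((1 : ℝ) - t) * ‖g₂ v‖ + (t : ℝ) * ‖v‖ ≤ R := by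
        have heq : (1 - (t : ℝ)) • g₂ v + (t : ℝ) • Pf v =
            (((1 : ℝ) - t) * ‖g₂ v‖ + (t : ℝ) * ‖v‖) • g₂ (‖v‖⁻¹ • v) := by
          rw [hPfv]
          conv_lhs => rw [hrad v hv1]
          rw [smul_smul, smul_smul, ← add_smul]
        rw [heq, norm_smul, hsph _ (hunit v hv0), mul_one, Real.norm_eq_abs,
          abs_of_nonneg (by nlinarith [norm_nonneg v])] at hnorm
        exact hnorm
      by_cases htc : (1 / 2 : ℝ) ≤ t
      · have : (t : ℝ) * ‖v‖ ≤ R := by nlinarith [norm_nonneg v]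
        have hvle : ‖v‖ ≤ 2 * R := by nlinarith [norm_nonneg v]
        exact hvle.trans ((le_max_left _ _).trans (le_max_right _ _))
      · push_neg at htc
        have hcle : ‖g₂ v‖ ≤ 2 * R := by nlinarith [norm_nonneg v]
        have : v ∈ g₂ ⁻¹' Metric.closedBall 0 (2 * R) := by
          simpa [Metric.mem_closedBall, dist_zero_right] using hcle
        have := hM this
        rw [Metric.mem_closedBall, dist_zero_right] at this
        exact this.trans ((le_max_right _ _).trans (le_max_right _ _))
  exact IsCompact.of_isClosed_subset
    (isCompact_univ.prod (isCompact_closedBall 0 B))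
    (hK.isClosed.preimage hG) hsub
end

section
/- Every proper continuous map f : ℝⁿ → ℝᵏ is properly homotopic to Pg for some continuous map g : S^{n-1} → S^{k-1}, where Pg(v) = ‖v‖g(v/‖v‖) for v ≠ 0 and Pg(0) = 0. -/
open Classical
/-- The radial extension `Pg` of a map of spheres `g`. -/
noncomputable def radialExt (n k : ℕ)
    (g : Metric.sphere (0 : EuclideanSpace ℝ (Fin n)) 1 →
         Metric.sphere (0 : EuclideanSpace ℝ (Fin k)) 1) :
    EuclideanSpace ℝ (Fin n) → EuclideanSpace ℝ (Fin k) := fun v =>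
  if h : v = 0 then 0
  else ‖v‖ • (g ⟨‖v‖⁻¹ • v, by
    rw [mem_sphere_zero_iff_norm, norm_smul, norm_inv, norm_norm,
      inv_mul_cancel₀ (norm_ne_zero_iff.mpr h)]⟩ : EuclideanSpace ℝ (Fin k))

section Aux

variable (n k : ℕ) (f : EuclideanSpace ℝ (Fin n) → EuclideanSpace ℝ (Fin k)) (R : ℝ)

/-- The "cone" map `v ↦ (‖v‖/‖f((R/‖v‖)v)‖) f((R/‖v‖)v)`. -/
noncomputable def Pmap : EuclideanSpace ℝ (Fin n) → EuclideanSpace ℝ (Fin k) := fun v =>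
  (‖v‖ / ‖f ((R / ‖v‖) • v)‖) • f ((R / ‖v‖) • v)

/-- stage-A time parameter -/
noncomputable def aT (t : unitInterval) : ℝ := min (2 * (t : ℝ)) 1

/-- stage-B time parameter -/
noncomputable def bT (t : unitInterval) : ℝ := max (2 * (t : ℝ) - 1) 0

/-- the radial compression parameter -/
noncomputable def lamF (p : unitInterval × EuclideanSpace ℝ (Fin n)) : ℝ :=
  min ‖p.2‖ ((1 - aT p.1) * ‖p.2‖ + aT p.1 * R)

/-- stage A of the homotopy -/
noncomputable def Amap (p : unitInterval × EuclideanSpace ℝ (Fin n)) :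
    EuclideanSpace ℝ (Fin k) :=
  if ‖p.2‖ ≤ R then f p.2
  else (‖p.2‖ / lamF n R p) • f ((lamF n R p / ‖p.2‖) • p.2)

/-- the full homotopy -/
noncomputable def Hmap (p : unitInterval × EuclideanSpace ℝ (Fin n)) :
    EuclideanSpace ℝ (Fin k) :=
  (1 - bT p.1) • Amap n k f R p + bT p.1 • Pmap n k f R p.2

lemma aT_nonneg (t : unitInterval) : 0 ≤ aT t :=
  le_min (by have := t.2.1; linarith) zero_le_one

lemma aT_le_one (t : unitInterval) : aT t ≤ 1 := min_le_right _ _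

lemma bT_nonneg (t : unitInterval) : 0 ≤ bT t := le_max_right _ _

lemma bT_le_one (t : unitInterval) : bT t ≤ 1 :=
  max_le (by have := t.2.2; linarith) zero_le_one

lemma aT_cont : Continuous aT :=
  (continuous_const.mul continuous_subtype_val).min continuous_const

lemma bT_cont : Continuous bT :=
  ((continuous_const.mul continuous_subtype_val).sub continuous_const).max continuous_const

lemma lamF_cont : Continuous (lamF n R) :=
  (continuous_norm.comp continuous_snd).min
    (((continuous_const.sub (aT_cont.comp continuous_fst)).mul
      (continuous_norm.comp continuous_snd)).add
      ((aT_cont.comp continuous_fst).mul continuous_const))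

lemma lamF_le (p : unitInterval × EuclideanSpace ℝ (Fin n)) : lamF n R p ≤ ‖p.2‖ :=
  min_le_left _ _

lemma lamF_ge (p : unitInterval × EuclideanSpace ℝ (Fin n)) (h : R ≤ ‖p.2‖) :
    R ≤ lamF n R p := by
  refine le_min h ?_
  have h1 := aT_le_one p.1
  nlinarith

/-- norm of the rescaled vector -/
lemma norm_smul_div {c : ℝ} (hc : 0 ≤ c) {v : EuclideanSpace ℝ (Fin n)} (hv : v ≠ 0) :
    ‖(c / ‖v‖) • v‖ = c := by
  rw [norm_smul, Real.norm_eq_abs, abs_of_nonneg (div_nonneg hc (norm_nonneg v)),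
    div_mul_cancel₀ _ (norm_ne_zero_iff.mpr hv)]

lemma Pmap_zero : Pmap n k f R 0 = 0 := by
  simp [Pmap]

lemma Pmap_norm_le (v : EuclideanSpace ℝ (Fin n)) : ‖Pmap n k f R v‖ ≤ ‖v‖ := by
  rw [Pmap, norm_smul, Real.norm_eq_abs]
  rcases eq_or_ne ‖f ((R / ‖v‖) • v)‖ 0 with h | h
  · rw [h, mul_zero]; exact norm_nonneg v
  · have hpos : 0 < ‖f ((R / ‖v‖) • v)‖ := lt_of_le_of_ne (norm_nonneg _) (Ne.symm h)
    rw [abs_of_nonneg (div_nonneg (norm_nonneg v) hpos.le), div_mul_cancel₀ _ h]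

lemma Pmap_cont (hfcont : Continuous f) (hR0 : 0 < R)
    (hR : ∀ v, R ≤ ‖v‖ → 1 < ‖f v‖) : Continuous (Pmap n k f R) := by
  rw [continuous_iff_continuousAt]
  intro v
  by_cases hv : v = 0
  · subst hv
    rw [ContinuousAt, Pmap_zero]
    exact squeeze_zero_norm (Pmap_norm_le n k f R)
      (by simpa using continuous_norm.tendsto (0 : EuclideanSpace ℝ (Fin n)))
  · have h1 : ContinuousAt (fun w : EuclideanSpace ℝ (Fin n) => (R / ‖w‖) • w) v :=
      (continuousAt_const.div continuous_norm.continuousAt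
        (norm_ne_zero_iff.mpr hv)).smul continuousAt_id
    have h2 : ContinuousAt (fun w : EuclideanSpace ℝ (Fin n) => f ((R / ‖w‖) • w)) v :=
      hfcont.continuousAt.comp h1
    have hne : ‖f ((R / ‖v‖) • v)‖ ≠ 0 := by
      have : 1 < ‖f ((R / ‖v‖) • v)‖ := hR _ (by rw [norm_smul_div n hR0.le hv])
      linarith
    exact (continuous_norm.continuousAt.div h2.norm hne).smul h2

lemma Amap_cont (hfcont : Continuous f) (hR1 : 1 ≤ R) : Continuous (Amap n k f R) := by
  apply continuous_if
  · intro p hp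
    have hpR : ‖p.2‖ = R :=
      frontier_le_subset_eq (continuous_norm.comp continuous_snd) continuous_const hp
    have hlam : lamF n R p = R := by
      rw [lamF, hpR]
      have : (1 - aT p.1) * R + aT p.1 * R = R := by ring
      rw [this, min_self]
    rw [hlam, hpR, div_self (by linarith), one_smul, one_smul]
  · exact (hfcont.comp continuous_snd).continuousOn
  · have hsub : closure {p : unitInterval × EuclideanSpace ℝ (Fin n) | ¬ ‖p.2‖ ≤ R} ⊆
        {p | R ≤ ‖p.2‖} :=
      closure_minimal (fun p hp => le_of_lt (not_le.mp hp))
        (isClosed_le continuous_const (continuous_norm.comp continuous_snd))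
    refine ContinuousOn.mono ?_ hsub
    have hlamne : ∀ p ∈ {p : unitInterval × EuclideanSpace ℝ (Fin n) | R ≤ ‖p.2‖},
        lamF n R p ≠ 0 := fun p hp => by
      have := lamF_ge n R p hp
      intro h; rw [h] at this; linarith
    have hnne : ∀ p ∈ {p : unitInterval × EuclideanSpace ℝ (Fin n) | R ≤ ‖p.2‖},
        ‖p.2‖ ≠ 0 := fun p hp => by
      have : (0:ℝ) < ‖p.2‖ := lt_of_lt_of_le (by linarith) hp
      linarith
    exact ((((continuous_norm.comp continuous_snd).continuousOn).div
        (lamF_cont n R).continuousOn hlamne).smul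
      (hfcont.comp_continuousOn
        (((lamF_cont n R).continuousOn.div
          ((continuous_norm.comp continuous_snd).continuousOn) hnne).smul
          continuous_snd.continuousOn)))

lemma Hmap_cont (hfcont : Continuous f) (hR1 : 1 ≤ R)
    (hR : ∀ v, R ≤ ‖v‖ → 1 < ‖f v‖) : Continuous (Hmap n k f R) :=
  ((continuous_const.sub (bT_cont.comp continuous_fst)).smul (Amap_cont n k f R hfcont hR1)).add
    ((bT_cont.comp continuous_fst).smul
      ((Pmap_cont n k f R hfcont (by linarith) hR).comp continuous_snd))

lemma Hmap_zero (hR1 : 1 ≤ R) (v : EuclideanSpace ℝ (Fin n)) :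
    Hmap n k f R (0, v) = f v := by
  have hb : bT (0 : unitInterval) = 0 := by simp [bT]
  have ha : aT (0 : unitInterval) = 0 := by simp [aT]
  have hA : Amap n k f R (0, v) = f v := by
    show (if ‖v‖ ≤ R then f v
      else (‖v‖ / lamF n R (0, v)) • f ((lamF n R (0, v) / ‖v‖) • v)) = f v
    split_ifs with h
    · rfl
    · have hv : ‖v‖ ≠ 0 := by push_neg at h; intro h0; rw [h0] at h; linarith
      have hlam : lamF n R (0, v) = ‖v‖ := by
        rw [lamF, ha]; simp
      rw [hlam, div_self hv, one_smul, one_smul]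
  rw [Hmap, hb, hA, sub_zero, one_smul, zero_smul, add_zero]

lemma Hmap_one (v : EuclideanSpace ℝ (Fin n)) :
    Hmap n k f R (1, v) = Pmap n k f R v := by
  have hb : bT (1 : unitInterval) = 1 := by norm_num [bT]
  rw [Hmap, hb, sub_self, zero_smul, one_smul, zero_add]

/-- The key norm estimate giving properness. -/
lemma Hmap_bound (hR1 : 1 ≤ R) (hR : ∀ v, R ≤ ‖v‖ → 1 < ‖f v‖)
    (M Q : ℝ) (hM : 1 ≤ M) (hQ : R ≤ Q) (hQf : ∀ v, Q ≤ ‖v‖ → M < ‖f v‖)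
    (p : unitInterval × EuclideanSpace ℝ (Fin n)) (h : ‖Hmap n k f R p‖ ≤ M) :
    ‖p.2‖ ≤ max R (M * Q) := by
  by_contra hcon
  push_neg at hcon
  obtain ⟨t, v⟩ := p
  have hrR : R < ‖v‖ := lt_of_le_of_lt (le_max_left _ _) hcon
  have hMQ : M * Q < ‖v‖ := lt_of_le_of_lt (le_max_right _ _) hcon
  have hv0 : (0:ℝ) < ‖v‖ := by linarith
  by_cases hb : bT t = 0
  · -- stage A
    set L := lamF n R (t, v) with hLdef
    have hLR : R ≤ L := lamF_ge n R (t, v) (le_of_lt hrR)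
    have hLr : L ≤ ‖v‖ := lamF_le n R (t, v)
    have hLpos : (0:ℝ) < L := by linarith
    have hwn : ‖(L / ‖v‖) • v‖ = L :=
      norm_smul_div n hLpos.le (norm_ne_zero_iff.mp (by linarith))
    have hfw : 1 < ‖f ((L / ‖v‖) • v)‖ := hR _ (by rw [hwn]; exact hLR)
    have hHA : Hmap n k f R (t, v) = (‖v‖ / L) • f ((L / ‖v‖) • v) := by
      rw [Hmap, hb, sub_zero, one_smul, zero_smul, add_zero, Amap,
        if_neg (not_le.mpr hrR)]
    have hnorm : ‖Hmap n k f R (t, v)‖ = (‖v‖ / L) * ‖f ((L / ‖v‖) • v)‖ := by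
      rw [hHA, norm_smul, Real.norm_eq_abs,
        abs_of_nonneg (div_nonneg hv0.le hLpos.le)]
    by_cases hLQ : Q ≤ L
    · have hfM : M < ‖f ((L / ‖v‖) • v)‖ := hQf _ (by rw [hwn]; exact hLQ)
      have h1 : 1 ≤ ‖v‖ / L := (one_le_div hLpos).mpr hLr
      have h3 := hnorm ▸ h
      have h4 : ‖f ((L / ‖v‖) • v)‖ ≤ (‖v‖ / L) * ‖f ((L / ‖v‖) • v)‖ :=
        le_mul_of_one_le_left (norm_nonneg _) h1
      linarith
    · push_neg at hLQ
      have h2 : ‖v‖ / L ≤ M := by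
        have h3 := hnorm ▸ h
        have h4 : ‖v‖ / L ≤ (‖v‖ / L) * ‖f ((L / ‖v‖) • v)‖ :=
          le_mul_of_one_le_right (div_nonneg hv0.le hLpos.le) hfw.le
        linarith
      rw [div_le_iff₀ hLpos] at h2
      have h5 : M * L ≤ M * Q := mul_le_mul_of_nonneg_left hLQ.le (by linarith)
      linarith
  · -- stage B
    have hbpos : 0 < bT t := lt_of_le_of_ne (bT_nonneg t) (Ne.symm hb)
    have ht2 : 1 < 2 * (t : ℝ) := by
      by_contra h2
      push_neg at h2
      exact hb.elim (max_eq_right (by linarith))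
    have haT1 : aT t = 1 := min_eq_right (by linarith)
    have hlamR : lamF n R (t, v) = R := by
      rw [lamF, haT1]
      have : (1 - (1:ℝ)) * ‖v‖ + 1 * R = R := by ring
      rw [this]
      exact min_eq_right hrR.le
    set w := (R / ‖v‖) • v with hwdef
    have hwn : ‖w‖ = R :=
      norm_smul_div n (by linarith) (norm_ne_zero_iff.mp (by linarith))
    have hc : 1 < ‖f w‖ := hR _ (by rw [hwn])
    set c : ℝ := ‖f w‖ with hcdef
    set b : ℝ := bT t with hbdef
    have hb1 : b ≤ 1 := bT_le_one t
    have hHB : Hmap n k f R (t, v) =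
        ((1 - b) * (‖v‖ / R) + b * (‖v‖ / c)) • f w := by
      rw [Hmap, Amap, if_neg (not_le.mpr hrR), hlamR, Pmap, smul_smul, smul_smul,
        ← add_smul]
    have hcoef : 0 ≤ (1 - b) * (‖v‖ / R) + b * (‖v‖ / c) := by
      have := div_nonneg hv0.le (by linarith : (0:ℝ) ≤ R)
      have := div_nonneg hv0.le (by linarith : (0:ℝ) ≤ c)
      nlinarith
    have hnorm : ‖Hmap n k f R (t, v)‖ =
        ((1 - b) * (‖v‖ / R) + b * (‖v‖ / c)) * c := by
      rw [hHB, norm_smul, Real.norm_eq_abs, abs_of_nonneg hcoef]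
    have hvc : b * (‖v‖ / c) * c = b * ‖v‖ := by
      field_simp
    have hexp : ‖Hmap n k f R (t, v)‖ = (1 - b) * (‖v‖ / R) * c + b * ‖v‖ := by
      rw [hnorm]; rw [add_mul, hvc]
    have hdivR : ‖v‖ / R ≤ ‖v‖ := by
      rw [div_le_iff₀ (by linarith : (0:ℝ) < R)]
      nlinarith
    have hdivRpos : 0 < ‖v‖ / R := div_pos hv0 (by linarith)
    -- ‖H‖ ≥ (1-b) * (‖v‖/R) + b * (‖v‖/R) = ‖v‖/R
    have hge : ‖v‖ / R ≤ ‖Hmap n k f R (t, v)‖ := by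
      rw [hexp]
      have h1 : 0 ≤ (1 - b) * (‖v‖ / R) * (c - 1) :=
        mul_nonneg (mul_nonneg (by linarith) hdivRpos.le) (by linarith)
      have h2 : 0 ≤ b * (‖v‖ - ‖v‖ / R) := mul_nonneg hbpos.le (by linarith)
      nlinarith
    have hle : ‖v‖ / R ≤ M := le_trans hge h
    rw [div_le_iff₀ (by linarith : (0:ℝ) < R)] at hle
    have h6 : M * R ≤ M * Q := mul_le_mul_of_nonneg_left hQ (by linarith)
    linarith

/-- The sphere map induced by `f` at radius `R`. -/
noncomputable def gmap
    (hfne : ∀ u : Metric.sphere (0 : EuclideanSpace ℝ (Fin n)) 1,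
      f (R • (u : EuclideanSpace ℝ (Fin n))) ≠ 0) :
    Metric.sphere (0 : EuclideanSpace ℝ (Fin n)) 1 →
      Metric.sphere (0 : EuclideanSpace ℝ (Fin k)) 1 := fun u =>
  ⟨‖f (R • (u : EuclideanSpace ℝ (Fin n)))‖⁻¹ • f (R • (u : EuclideanSpace ℝ (Fin n))), by
    rw [mem_sphere_zero_iff_norm, norm_smul, norm_inv, norm_norm,
      inv_mul_cancel₀ (norm_ne_zero_iff.mpr (hfne u))]⟩

lemma gmap_cont (hfcont : Continuous f)
    (hfne : ∀ u : Metric.sphere (0 : EuclideanSpace ℝ (Fin n)) 1,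
      f (R • (u : EuclideanSpace ℝ (Fin n))) ≠ 0) :
    Continuous (gmap n k f R hfne) := by
  have hc : Continuous fun u : Metric.sphere (0 : EuclideanSpace ℝ (Fin n)) 1 =>
      f (R • (u : EuclideanSpace ℝ (Fin n))) :=
    hfcont.comp (continuous_subtype_val.const_smul R)
  exact Continuous.subtype_mk
    ((hc.norm.inv₀ fun u => norm_ne_zero_iff.mpr (hfne u)).smul hc) _

lemma radialExt_eq_Pmap
    (hfne : ∀ u : Metric.sphere (0 : EuclideanSpace ℝ (Fin n)) 1,
      f (R • (u : EuclideanSpace ℝ (Fin n))) ≠ 0) :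
    radialExt n k (gmap n k f R hfne) = Pmap n k f R := by
  funext v
  by_cases hv : v = 0
  · subst hv
    rw [radialExt, dif_pos rfl, Pmap_zero]
  · rw [radialExt, dif_neg hv]
    have hvv : R • (‖v‖⁻¹ • v) = (R / ‖v‖) • v := by
      rw [smul_smul, div_eq_mul_inv]
    show ‖v‖ • (‖f (R • (‖v‖⁻¹ • v))‖⁻¹ • f (R • (‖v‖⁻¹ • v))) = Pmap n k f R v
    rw [hvv, Pmap, smul_smul, div_eq_mul_inv]
    rw [div_eq_mul_inv]

end Aux

/-- Every proper continuous map `f : ℝⁿ → ℝᵏ` is properly homotopic to `Pg` for some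
continuous map `g : S^{n-1} → S^{k-1}`. -/
theorem stmt_10 (n k : ℕ)
    (f : EuclideanSpace ℝ (Fin n) → EuclideanSpace ℝ (Fin k))
    (hfcont : Continuous f)
    (hfprop : ∀ K : Set (EuclideanSpace ℝ (Fin k)), IsCompact K → IsCompact (f ⁻¹' K)) :
    ∃ g : Metric.sphere (0 : EuclideanSpace ℝ (Fin n)) 1 →
          Metric.sphere (0 : EuclideanSpace ℝ (Fin k)) 1,
      Continuous g ∧
      ∃ H : unitInterval × EuclideanSpace ℝ (Fin n) → EuclideanSpace ℝ (Fin k),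
        Continuous H ∧
        (∀ K : Set (EuclideanSpace ℝ (Fin k)), IsCompact K → IsCompact (H ⁻¹' K)) ∧
        (∀ v, H (0, v) = f v) ∧ (∀ v, H (1, v) = radialExt n k g v) := by
  classical
  -- properness gives: beyond some radius, ‖f v‖ is large
  have key : ∀ M : ℝ, ∃ S : ℝ, ∀ v, S ≤ ‖v‖ → M < ‖f v‖ := by
    intro M
    obtain ⟨ρ, hρ⟩ :=
      ((hfprop _ (isCompact_closedBall (0 : EuclideanSpace ℝ (Fin k)) M)).isBounded).subset_ball 0
    refine ⟨ρ, fun v hv => ?_⟩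
    by_contra hle
    push_neg at hle
    have : v ∈ f ⁻¹' Metric.closedBall 0 M := by
      simp only [Set.mem_preimage, Metric.mem_closedBall, dist_zero_right]
      exact hle
    have := hρ this
    rw [Metric.mem_ball, dist_zero_right] at this
    linarith
  obtain ⟨S₁, hS₁⟩ := key 1
  set R : ℝ := max 1 S₁ with hRdef
  have hR1 : (1:ℝ) ≤ R := le_max_left _ _
  have hR : ∀ v, R ≤ ‖v‖ → 1 < ‖f v‖ := fun v hv =>
    hS₁ v (le_trans (le_max_right _ _) hv)
  have hfne : ∀ u : Metric.sphere (0 : EuclideanSpace ℝ (Fin n)) 1,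
      f (R • (u : EuclideanSpace ℝ (Fin n))) ≠ 0 := by
    intro u
    have hu : ‖(u : EuclideanSpace ℝ (Fin n))‖ = 1 := mem_sphere_zero_iff_norm.mp u.2
    have hn : ‖R • (u : EuclideanSpace ℝ (Fin n))‖ = R := by
      rw [norm_smul, Real.norm_eq_abs, abs_of_pos (by linarith : (0:ℝ) < R), hu, mul_one]
    have := hR _ (le_of_eq hn.symm)
    exact norm_ne_zero_iff.mp (by linarith)
  refine ⟨gmap n k f R hfne, gmap_cont n k f R hfcont hfne, Hmap n k f R,
    Hmap_cont n k f R hfcont hR1 hR, ?_, Hmap_zero n k f R hR1,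
    fun v => by rw [Hmap_one, radialExt_eq_Pmap n k f R hfne]⟩
  -- properness of the homotopy
  intro K hK
  obtain ⟨M₀, hM₀⟩ := hK.isBounded.subset_ball 0
  set M : ℝ := max M₀ 1 with hMdef
  have hM1 : (1:ℝ) ≤ M := le_max_right _ _
  obtain ⟨S, hS⟩ := key M
  set Q : ℝ := max S R with hQdef
  have hQR : R ≤ Q := le_max_right _ _
  have hQf : ∀ v, Q ≤ ‖v‖ → M < ‖f v‖ := fun v hv =>
    hS v (le_trans (le_max_left _ _) hv)
  have hbound : ∀ p : unitInterval × EuclideanSpace ℝ (Fin n),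
      Hmap n k f R p ∈ K → ‖p.2‖ ≤ max R (M * Q) := by
    intro p hp
    refine Hmap_bound n k f R hR1 hR M Q hM1 hQR hQf p ?_
    have := hM₀ hp
    rw [Metric.mem_ball, dist_zero_right] at this
    exact le_trans this.le (le_max_left _ _)
  have hsub : Hmap n k f R ⁻¹' K ⊆
      (Set.univ : Set unitInterval) ×ˢ Metric.closedBall 0 (max R (M * Q)) := by
    intro p hp
    refine ⟨Set.mem_univ _, ?_⟩
    rw [Metric.mem_closedBall, dist_zero_right]
    exact hbound p hp
  exact IsCompact.of_isClosed_subset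
    (isCompact_univ.prod (isCompact_closedBall _ _))
    (hK.isClosed.preimage (Hmap_cont n k f R hfcont hR1 hR)) hsub
end

section
/- The assignment g ↦ Pg induces a bijection from the set of (free) homotopy classes of continuous maps S^{n-1} → S^{k-1} to the set of proper homotopy classes of proper continuous maps ℝⁿ → ℝᵏ. -/
open Classical

/-- Two maps `ℝⁿ → ℝᵏ` are properly homotopic if they are joined by a homotopy which
is itself a proper map. -/
def ProperlyHomotopic (n k : ℕ)
    (f₀ f₁ : EuclideanSpace ℝ (Fin n) → EuclideanSpace ℝ (Fin k)) : Prop :=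
  ∃ H : unitInterval × EuclideanSpace ℝ (Fin n) → EuclideanSpace ℝ (Fin k),
    Continuous H ∧
    (∀ K : Set (EuclideanSpace ℝ (Fin k)), IsCompact K → IsCompact (H ⁻¹' K)) ∧
    (∀ v, H (0, v) = f₀ v) ∧ (∀ v, H (1, v) = f₁ v)

/-- Free homotopy of maps of spheres. -/
def SphereHomotopic (n k : ℕ)
    (g₀ g₁ : Metric.sphere (0 : EuclideanSpace ℝ (Fin n)) 1 →
             Metric.sphere (0 : EuclideanSpace ℝ (Fin k)) 1) : Prop :=
  ∃ H : unitInterval × Metric.sphere (0 : EuclideanSpace ℝ (Fin n)) 1 →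
        Metric.sphere (0 : EuclideanSpace ℝ (Fin k)) 1,
    Continuous H ∧ (∀ x, H (0, x) = g₀ x) ∧ (∀ x, H (1, x) = g₁ x)

/-!
`Pg` is the cone `v ↦ ‖v‖ • g (v / ‖v‖)`. Coning a continuous family of nonvanishing maps on the
sphere gives a continuous family of maps whose norm grows at least linearly, hence a proper
homotopy; this handles well-definedness. Conversely a proper homotopy does not vanish outside a
large ball, so normalising it on the sphere of a large radius `R` gives a homotopy of sphere maps.
For surjectivity, a proper map `f` is deformed through the rescalings `v ↦ d • f (d⁻¹ • v)`, with
`d` running from `1` to `‖v‖ / R`, into the cone over `x ↦ R⁻¹ • f (R • x)`; on each ray this map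
points in the same direction as `f (R • x) / ‖f (R • x)‖`, and the straight-line homotopy between
the two cones is proper.
-/

open Metric Set Filter Topology unitInterval

section Properness

variable {E F : Type*} [NormedAddCommGroup E] [NormedAddCommGroup F]

lemma exists_pos_forall_le_norm {Y : Type*} [TopologicalSpace Y] [CompactSpace Y]
    {φ : Y → F} (hφ : Continuous φ) (h₀ : ∀ y, φ y ≠ 0) : ∃ m > 0, ∀ y, m ≤ ‖φ y‖ := by
  rcases isEmpty_or_nonempty Y with hY | hY
  · exact ⟨1, one_pos, fun y => isEmptyElim y⟩
  · obtain ⟨y₀, -, hy₀⟩ := isCompact_univ.exists_isMinOn univ_nonempty hφ.norm.continuousOn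
    exact ⟨‖φ y₀‖, norm_pos_iff.2 (h₀ y₀), fun y => hy₀ (mem_univ y)⟩

lemma isCompact_preimage_of_forall_lt_norm {X : Type*} [TopologicalSpace X] [CompactSpace X]
    [ProperSpace E] {H : X × E → F} (hH : Continuous H)
    (h : ∀ r, ∃ S, ∀ p : X × E, S ≤ ‖p.2‖ → r < ‖H p‖) :
    ∀ K : Set F, IsCompact K → IsCompact (H ⁻¹' K) := by
  intro K hK
  obtain ⟨r, hr⟩ := hK.isBounded.subset_closedBall 0
  obtain ⟨S, hS⟩ := h r
  refine (isCompact_univ.prod (isCompact_closedBall (0 : E) S)).of_isClosed_subset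
    (hK.isClosed.preimage hH) fun p hp => ⟨trivial, ?_⟩
  have hHp : ‖H p‖ ≤ r := by simpa using hr hp
  exact mem_closedBall_zero_iff.2 (not_lt.1 fun hSp => (hS p hSp.le).not_ge hHp)

lemma isCompact_preimage_of_forall_lt_norm' [ProperSpace E] {f : E → F} (hf : Continuous f)
    (h : ∀ r, ∃ S, ∀ v : E, S ≤ ‖v‖ → r < ‖f v‖) :
    ∀ K : Set F, IsCompact K → IsCompact (f ⁻¹' K) := by
  intro K hK
  have := isCompact_preimage_of_forall_lt_norm (X := Unit) (hf.comp continuous_snd)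
    (fun r => (h r).imp fun S hS p => hS p.2) K hK
  simpa [preimage_comp, image_preimage_eq _ Prod.snd_surjective] using
    this.image continuous_snd

lemma exists_forall_lt_norm_of_isCompact_preimage [ProperSpace F] {Y : Type*} [TopologicalSpace Y]
    {φ : Y → F} {ψ : Y → E} (hψ : Continuous ψ)
    (hφ : ∀ K : Set F, IsCompact K → IsCompact (φ ⁻¹' K)) (r : ℝ) :
    ∃ S, ∀ y, S ≤ ‖ψ y‖ → r < ‖φ y‖ := by
  obtain ⟨S, hS⟩ :=
    ((hφ _ (isCompact_closedBall (0 : F) r)).image hψ).isBounded.subset_closedBall 0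
  refine ⟨S + 1, fun y hy => not_le.1 fun hle => ?_⟩
  have : ‖ψ y‖ ≤ S := by simpa using hS (mem_image_of_mem ψ (by simpa using hle))
  linarith

end Properness

section Normed

variable {E F : Type*} [NormedAddCommGroup E] [NormedSpace ℝ E]
  [NormedAddCommGroup F] [NormedSpace ℝ F]

noncomputable def unitSphereProj (v : E) (hv : v ≠ 0) : sphere (0 : E) 1 :=
  ⟨‖v‖⁻¹ • v, by
    rw [mem_sphere_zero_iff_norm, norm_smul, norm_inv, norm_norm,
      inv_mul_cancel₀ (norm_ne_zero_iff.mpr hv)]⟩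

@[simp]
lemma coe_unitSphereProj (v : E) (hv : v ≠ 0) : (unitSphereProj v hv : E) = ‖v‖⁻¹ • v :=
  rfl

lemma unitSphereProj_eq_of_eq_smul {v : E} (hv : v ≠ 0) {c : ℝ} (hc : 0 < c)
    {x : sphere (0 : E) 1} (h : v = c • (x : E)) : unitSphereProj v hv = x := by
  subst h
  ext1
  rw [coe_unitSphereProj, norm_smul, norm_eq_of_mem_sphere, mul_one, Real.norm_of_nonneg hc.le,
    smul_smul, inv_mul_cancel₀ hc.ne', one_smul]

lemma Continuous.unitSphereProj {Y : Type*} [TopologicalSpace Y] {φ : Y → E}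
    (hφ : Continuous φ) (h₀ : ∀ y, φ y ≠ 0) :
    Continuous fun y => unitSphereProj (φ y) (h₀ y) :=
  ((hφ.norm.inv₀ fun y => norm_ne_zero_iff.mpr (h₀ y)).smul hφ).subtype_mk _

noncomputable def homogeneousExt (h : sphere (0 : E) 1 → F) (v : E) : F :=
  if hv : v = 0 then 0 else ‖v‖ • h (unitSphereProj v hv)

section homogeneousExt

variable {h : sphere (0 : E) 1 → F}

@[simp]
lemma homogeneousExt_zero : homogeneousExt h 0 = 0 :=
  dif_pos rfl

lemma homogeneousExt_of_ne_zero {v : E} (hv : v ≠ 0) :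
    homogeneousExt h v = ‖v‖ • h (unitSphereProj v hv) :=
  dif_neg hv

lemma homogeneousExt_smul {c : ℝ} (hc : 0 < c) (x : sphere (0 : E) 1) :
    homogeneousExt h (c • (x : E)) = c • h x := by
  have hne : c • (x : E) ≠ 0 := smul_ne_zero hc.ne' (ne_zero_of_mem_unit_sphere x)
  rw [homogeneousExt_of_ne_zero hne, unitSphereProj_eq_of_eq_smul hne hc rfl, norm_smul,
    norm_eq_of_mem_sphere, mul_one, Real.norm_of_nonneg hc.le]

lemma norm_homogeneousExt_le {M : ℝ} (hM : ∀ x, ‖h x‖ ≤ M) (v : E) :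
    ‖homogeneousExt h v‖ ≤ M * ‖v‖ := by
  rcases eq_or_ne v 0 with rfl | hv
  · simp
  · rw [homogeneousExt_of_ne_zero hv, norm_smul, norm_norm, mul_comm M]
    exact mul_le_mul_of_nonneg_left (hM _) (norm_nonneg v)

lemma le_norm_homogeneousExt {m : ℝ} (hm : ∀ x, m ≤ ‖h x‖) (v : E) :
    m * ‖v‖ ≤ ‖homogeneousExt h v‖ := by
  rcases eq_or_ne v 0 with rfl | hv
  · simp
  · rw [homogeneousExt_of_ne_zero hv, norm_smul, norm_norm, mul_comm m]
    exact mul_le_mul_of_nonneg_left (hm _) (norm_nonneg v)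

end homogeneousExt

lemma continuous_homogeneousExt {X : Type*} [TopologicalSpace X]
    {G : X × sphere (0 : E) 1 → F} (hG : Continuous G) {M : ℝ} (hM : ∀ p, ‖G p‖ ≤ M) :
    Continuous fun p : X × E => homogeneousExt (fun x => G (p.1, x)) p.2 := by
  refine continuous_iff_continuousAt.2 fun ⟨x, v⟩ => ?_
  rcases eq_or_ne v 0 with rfl | hv
  · rw [ContinuousAt, homogeneousExt_zero]
    refine squeeze_zero_norm (fun p => norm_homogeneousExt_le (fun y => hM (p.1, y)) p.2) ?_
    exact (continuous_const.mul continuous_snd.norm).tendsto' (x, (0 : E)) 0 (by simp)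
  · have hopen : IsOpen {p : X × E | p.2 ≠ 0} := isOpen_ne.preimage continuous_snd
    refine ContinuousOn.continuousAt ?_ (hopen.mem_nhds hv)
    rw [continuousOn_iff_continuous_domRestrict]
    have hval : Continuous fun q : {p : X × E | p.2 ≠ 0} => q.1.2 :=
      continuous_snd.comp continuous_subtype_val
    exact (hval.norm.smul (hG.comp ((continuous_fst.comp continuous_subtype_val).prodMk
      (hval.unitSphereProj fun q => q.2)))).congr fun q =>
      (homogeneousExt_of_ne_zero (h := fun x => G (q.1.1, x)) q.2).symm

lemma SameRay.smul_add_smul_ne_zero {x y : F} (h : SameRay ℝ x y) (hx : x ≠ 0) (hy : y ≠ 0)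
    {a b : ℝ} (ha : 0 ≤ a) (hb : 0 ≤ b) (hab : 0 < a + b) : a • x + b • y ≠ 0 := by
  rw [← norm_pos_iff, ((h.nonneg_smul_left ha).nonneg_smul_right hb).norm_add, norm_smul,
    norm_smul, Real.norm_of_nonneg ha, Real.norm_of_nonneg hb]
  have hx' := norm_pos_iff.2 hx
  have hy' := norm_pos_iff.2 hy
  rcases ha.eq_or_lt with rfl | ha'
  · rw [zero_add] at hab
    rw [zero_mul, zero_add]
    positivity
  · exact add_pos_of_pos_of_nonneg (mul_pos ha' hx') (mul_nonneg hb hy'.le)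

end Normed

section RescaleFactor

variable {E : Type*} [NormedAddCommGroup E] {R : ℝ}

noncomputable def rescaleFactor (R : ℝ) (p : I × E) : ℝ :=
  1 - p.1 + p.1 * (‖p.2‖ / R)

lemma continuous_rescaleFactor (R : ℝ) : Continuous (rescaleFactor (E := E) R) := by
  unfold rescaleFactor
  fun_prop

lemma rescaleFactor_nonneg (hR : 0 < R) (p : I × E) : 0 ≤ rescaleFactor R p := by
  have ht := p.1.2.2
  unfold rescaleFactor
  have : 0 ≤ (p.1 : ℝ) * (‖p.2‖ / R) := mul_nonneg p.1.2.1 (by positivity)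
  linarith

lemma rescaleFactor_eq_zero (hR : 0 < R) {p : I × E} (hp : rescaleFactor R p = 0) :
    (p.1 : ℝ) = 1 := by
  have ht := p.1.2.2
  unfold rescaleFactor at hp
  have : 0 ≤ (p.1 : ℝ) * (‖p.2‖ / R) := mul_nonneg p.1.2.1 (by positivity)
  linarith

lemma norm_le_rescaleFactor (hR : 0 < R) {p : I × E} (ht : 1 / 2 ≤ (p.1 : ℝ)) :
    ‖p.2‖ ≤ 2 * R * rescaleFactor R p := by
  have ht₁ := p.1.2.2
  have h : 2 * R * ((p.1 : ℝ) * (‖p.2‖ / R)) = 2 * p.1 * ‖p.2‖ := by field_simp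
  unfold rescaleFactor
  rw [mul_add, h]
  nlinarith [norm_nonneg p.2]

lemma one_le_rescaleFactor (hR : 0 < R) {p : I × E} (hp : R ≤ ‖p.2‖) :
    1 ≤ rescaleFactor R p := by
  have : 1 ≤ ‖p.2‖ / R := (one_le_div hR).2 hp
  unfold rescaleFactor
  nlinarith [p.1.2.1]

lemma rescaleFactor_le (hR : 0 < R) {p : I × E} (hp : R ≤ ‖p.2‖) :
    rescaleFactor R p ≤ ‖p.2‖ / R := by
  have : 1 ≤ ‖p.2‖ / R := (one_le_div hR).2 hp
  unfold rescaleFactor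
  nlinarith [p.1.2.2]

end RescaleFactor

section Rescale

variable {E F : Type*} [NormedAddCommGroup E] [NormedSpace ℝ E]
  [NormedAddCommGroup F] [NormedSpace ℝ F] {R : ℝ}

noncomputable def rescaleHomotopy (f : E → F) (R : ℝ) (p : I × E) : F :=
  rescaleFactor R p • f ((rescaleFactor R p)⁻¹ • p.2)

lemma continuous_rescaleHomotopy [ProperSpace E] {f : E → F} (hf : Continuous f) (hR : 0 < R) :
    Continuous (rescaleHomotopy f R) := by
  have hd := continuous_rescaleFactor (E := E) R
  refine continuous_iff_continuousAt.2 fun p => ?_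
  rcases ne_or_eq (rescaleFactor R p) 0 with hp | hp
  · exact hd.continuousAt.smul
      (hf.continuousAt.comp ((hd.continuousAt.inv₀ hp).smul continuousAt_snd))
  -- This only happens at `(1, 0)`; nearby `d⁻¹ • v` stays in the ball of radius `2 R`.
  obtain ⟨M, hM⟩ :=
    (isCompact_closedBall (0 : E) (2 * R)).exists_bound_of_continuousOn hf.continuousOn
  have hnear : ∀ᶠ q in 𝓝 p, 1 / 2 < ((q.1 : I) : ℝ) :=
    continuousAt_const.eventually_lt (continuous_subtype_val.comp continuous_fst).continuousAt
      (by rw [rescaleFactor_eq_zero hR hp]; norm_num)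
  rw [ContinuousAt, show rescaleHomotopy f R p = 0 by simp [rescaleHomotopy, hp]]
  refine squeeze_zero_norm' (a := fun q => rescaleFactor R q * M) ?_ ?_
  · filter_upwards [hnear] with q hq
    have hd₀ := rescaleFactor_nonneg hR q
    have hw : ‖(rescaleFactor R q)⁻¹ • q.2‖ ≤ 2 * R := by
      rw [norm_smul, norm_inv, Real.norm_of_nonneg hd₀]
      rcases hd₀.eq_or_lt with h | h
      · rw [← h, inv_zero, zero_mul]
        positivity
      · rw [inv_mul_le_iff₀ h, mul_comm]
        exact norm_le_rescaleFactor hR hq.le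
    rw [rescaleHomotopy, norm_smul, Real.norm_of_nonneg hd₀]
    exact mul_le_mul_of_nonneg_left (hM _ (mem_closedBall_zero_iff.2 hw)) hd₀
  · have : Continuous fun q => rescaleFactor R q * M := hd.mul continuous_const
    exact this.tendsto' p 0 (by simp [hp])

lemma exists_forall_lt_norm_rescaleHomotopy {f : E → F} (hR : 0 < R)
    (hfR : ∀ w, R ≤ ‖w‖ → 1 ≤ ‖f w‖) (hf : ∀ r, ∃ S, ∀ w : E, S ≤ ‖w‖ → r < ‖f w‖) (r : ℝ) :
    ∃ S, ∀ p : I × E, S ≤ ‖p.2‖ → r < ‖rescaleHomotopy f R p‖ := by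
  obtain ⟨S₀, hS₀⟩ := hf r
  refine ⟨max R (r * S₀), fun p hp => ?_⟩
  have hRv : R ≤ ‖p.2‖ := le_of_max_le_left hp
  set d := rescaleFactor R p
  set w := d⁻¹ • p.2
  have hd₁ : 1 ≤ d := one_le_rescaleFactor hR hRv
  have hw : ‖w‖ * d = ‖p.2‖ := by
    rw [norm_smul, norm_inv, Real.norm_of_nonneg (by linarith)]
    field_simp
  have hRw : R ≤ ‖w‖ := by
    have := rescaleFactor_le hR hRv
    rw [le_div_iff₀ hR, ← hw] at this
    nlinarith
  have hH : ‖rescaleHomotopy f R p‖ = d * ‖f w‖ := by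
    rw [rescaleHomotopy, norm_smul, Real.norm_of_nonneg (by linarith)]
  rw [hH]
  rcases le_or_gt S₀ ‖w‖ with hw₀ | hw₀
  · nlinarith [hS₀ w hw₀, norm_nonneg (f w)]
  · -- `d = ‖v‖ / ‖w‖` is then large
    have hrd : r < d := by
      refine lt_of_mul_lt_mul_right ?_ (hR.le.trans hRw |>.trans hw₀.le)
      calc r * S₀ ≤ ‖w‖ * d := hw ▸ le_of_max_le_right hp
        _ < S₀ * d := by nlinarith
        _ = d * S₀ := mul_comm _ _
    nlinarith [hfR w hRw]

lemma rescaleHomotopy_zero (f : E → F) (R : ℝ) (v : E) : rescaleHomotopy f R (0, v) = f v := by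
  simp [rescaleHomotopy, rescaleFactor]

lemma rescaleHomotopy_one (f : E → F) (R : ℝ) (v : E) :
    rescaleHomotopy f R (1, v) = homogeneousExt (fun x => R⁻¹ • f (R • (x : E))) v := by
  rcases eq_or_ne v 0 with rfl | hv
  · simp [rescaleHomotopy, rescaleFactor]
  · rw [homogeneousExt_of_ne_zero hv, rescaleHomotopy, rescaleFactor, coe_unitSphereProj]
    simp only [Set.Icc.coe_one, sub_self, zero_add, one_mul, smul_smul, inv_div]
    rw [div_eq_mul_inv, div_eq_mul_inv]

end Rescale

section Euclidean

variable {n k : ℕ}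

local notation "E" => EuclideanSpace ℝ (Fin n)
local notation "F" => EuclideanSpace ℝ (Fin k)

lemma ProperlyHomotopic.symm {f₀ f₁ : E → F} (h : ProperlyHomotopic n k f₀ f₁) :
    ProperlyHomotopic n k f₁ f₀ := by
  obtain ⟨H, hH, hHp, h₀, h₁⟩ := h
  let τ : I × E ≃ₜ I × E := symmHomeomorph.prodCongr (Homeomorph.refl E)
  refine ⟨H ∘ τ, hH.comp τ.continuous, fun K hK => ?_, fun v => ?_, fun v => ?_⟩
  · rw [preimage_comp]
    exact τ.isCompact_preimage.2 (hHp K hK)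
  · simpa [τ] using h₁ v
  · simpa [τ] using h₀ v

lemma ProperlyHomotopic.trans {f₀ f₁ f₂ : E → F} (h₀₁ : ProperlyHomotopic n k f₀ f₁)
    (h₁₂ : ProperlyHomotopic n k f₁ f₂) : ProperlyHomotopic n k f₀ f₂ := by
  obtain ⟨H, hH, hHp, hH₀, hH₁⟩ := h₀₁
  obtain ⟨H', hH', hH'p, hH'₀, hH'₁⟩ := h₁₂
  let clamp : ℝ → I := projIcc 0 1 zero_le_one
  let G : I × E → F := fun p =>
    if (p.1 : ℝ) ≤ 1 / 2 then H (clamp (2 * p.1), p.2) else H' (clamp (2 * p.1 - 1), p.2)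
  have hG : Continuous G := by
    refine Continuous.if_le (by fun_prop) (by fun_prop) (by fun_prop) continuous_const ?_
    · rintro ⟨t, v⟩ (ht : (t : ℝ) = 1 / 2)
      simp only [ht, clamp]
      norm_num
      simpa [← hH'₀ v] using hH₁ v
  refine ⟨G, hG, fun K hK => ?_, fun v => ?_, fun v => ?_⟩
  · refine (isCompact_univ.prod (((hHp K hK).image continuous_snd).union
      ((hH'p K hK).image continuous_snd))).of_isClosed_subset (hK.isClosed.preimage hG) ?_
    rintro ⟨t, v⟩ hp
    refine ⟨trivial, ?_⟩
    by_cases ht : (t : ℝ) ≤ 1 / 2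
    · exact Or.inl ⟨(clamp (2 * t), v), by simpa only [G, mem_preimage, if_pos ht] using hp, rfl⟩
    · exact Or.inr ⟨(clamp (2 * t - 1), v), by simpa only [G, mem_preimage, if_neg ht] using hp, rfl⟩
  · simpa [G, clamp] using hH₀ v
  · norm_num [G, clamp, hH'₁]

lemma properlyHomotopic_homogeneousExt {G : I × sphere (0 : E) 1 → F} (hG : Continuous G)
    (hG₀ : ∀ p, G p ≠ 0) :
    ProperlyHomotopic n k (homogeneousExt fun x => G (0, x)) (homogeneousExt fun x => G (1, x)) := by
  obtain ⟨M, hM⟩ := isCompact_univ.exists_bound_of_continuousOn hG.continuousOn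
  obtain ⟨m, hm, hmG⟩ := exists_pos_forall_le_norm hG hG₀
  have hc := continuous_homogeneousExt hG fun p => hM p trivial
  refine ⟨_, hc, isCompact_preimage_of_forall_lt_norm hc fun r => ⟨(|r| + 1) / m, fun p hp => ?_⟩,
    fun _ => rfl, fun _ => rfl⟩
  calc r < |r| + 1 := by linarith [le_abs_self r]
    _ ≤ m * ‖p.2‖ := by rwa [div_le_iff₀' hm] at hp
    _ ≤ _ := le_norm_homogeneousExt (fun x => hmG _) p.2

lemma properlyHomotopic_homogeneousExt_of_sameRay {h₀ h₁ : sphere (0 : E) 1 → F}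
    (hc₀ : Continuous h₀) (hc₁ : Continuous h₁) (hne₀ : ∀ x, h₀ x ≠ 0) (hne₁ : ∀ x, h₁ x ≠ 0)
    (hray : ∀ x, SameRay ℝ (h₀ x) (h₁ x)) :
    ProperlyHomotopic n k (homogeneousExt h₀) (homogeneousExt h₁) := by
  simpa using properlyHomotopic_homogeneousExt
    (G := fun p => (1 - (p.1 : ℝ)) • h₀ p.2 + (p.1 : ℝ) • h₁ p.2) (by fun_prop)
    fun p => (hray p.2).smul_add_smul_ne_zero (hne₀ p.2) (hne₁ p.2) (sub_nonneg.2 p.1.2.2)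
      p.1.2.1 (by norm_num)

lemma radialExt_eq_homogeneousExt (g : sphere (0 : E) 1 → sphere (0 : F) 1) :
    radialExt n k g = homogeneousExt fun x => (g x : F) := by
  funext v
  rcases eq_or_ne v 0 with rfl | hv
  · simp [radialExt]
  · rw [homogeneousExt_of_ne_zero hv]
    exact dif_neg hv

lemma norm_radialExt (g : sphere (0 : E) 1 → sphere (0 : F) 1) (v : E) :
    ‖radialExt n k g v‖ = ‖v‖ := by
  rw [radialExt_eq_homogeneousExt]
  refine le_antisymm ?_ ?_
  · simpa using norm_homogeneousExt_le (fun x => (norm_eq_of_mem_sphere (g x)).le) v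
  · simpa using le_norm_homogeneousExt (fun x => (norm_eq_of_mem_sphere (g x)).ge) v

lemma continuous_radialExt {g : sphere (0 : E) 1 → sphere (0 : F) 1} (hg : Continuous g) :
    Continuous (radialExt n k g) := by
  rw [radialExt_eq_homogeneousExt]
  exact (continuous_homogeneousExt (X := Unit) (G := fun p => (g p.2 : F)) (by fun_prop)
    fun p => (norm_eq_of_mem_sphere (g p.2)).le).comp (Continuous.prodMk_right ())

lemma isCompact_preimage_radialExt {g : sphere (0 : E) 1 → sphere (0 : F) 1}
    (hg : Continuous g) : ∀ K : Set F, IsCompact K → IsCompact (radialExt n k g ⁻¹' K) :=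
  isCompact_preimage_of_forall_lt_norm' (continuous_radialExt hg) fun r =>
    ⟨r + 1, fun v hv => by rw [norm_radialExt]; linarith⟩

lemma SphereHomotopic.properlyHomotopic_radialExt {g₀ g₁ : sphere (0 : E) 1 → sphere (0 : F) 1}
    (h : SphereHomotopic n k g₀ g₁) :
    ProperlyHomotopic n k (radialExt n k g₀) (radialExt n k g₁) := by
  obtain ⟨G, hG, hG₀, hG₁⟩ := h
  simpa [radialExt_eq_homogeneousExt, hG₀, hG₁] using
    properlyHomotopic_homogeneousExt (G := fun p => (G p : F)) (by fun_prop)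
      fun p => ne_zero_of_mem_unit_sphere (G p)

lemma ProperlyHomotopic.sphereHomotopic {g₀ g₁ : sphere (0 : E) 1 → sphere (0 : F) 1}
    (h : ProperlyHomotopic n k (radialExt n k g₀) (radialExt n k g₁)) :
    SphereHomotopic n k g₀ g₁ := by
  obtain ⟨H, hH, hHp, h₀, h₁⟩ := h
  obtain ⟨S, hS⟩ := exists_forall_lt_norm_of_isCompact_preimage continuous_snd hHp 0
  set R := max S 1
  have hR : 0 < R := lt_max_of_lt_right one_pos
  have hne : ∀ p : I × sphere (0 : E) 1, H (p.1, R • (p.2 : E)) ≠ 0 := fun p =>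
    norm_pos_iff.1 (hS _ (by simp [norm_smul, abs_of_pos hR, R]))
  have hc : Continuous fun p : I × sphere (0 : E) 1 => H (p.1, R • (p.2 : E)) := by fun_prop
  refine ⟨fun p => unitSphereProj _ (hne p), hc.unitSphereProj hne, fun x => ?_, fun x => ?_⟩
  · exact unitSphereProj_eq_of_eq_smul _ hR
      (by rw [h₀, radialExt_eq_homogeneousExt, homogeneousExt_smul hR])
  · exact unitSphereProj_eq_of_eq_smul _ hR
      (by rw [h₁, radialExt_eq_homogeneousExt, homogeneousExt_smul hR])

lemma exists_radialExt_properlyHomotopic {f : E → F} (hf : Continuous f)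
    (hfp : ∀ K : Set F, IsCompact K → IsCompact (f ⁻¹' K)) :
    ∃ g, Continuous g ∧ ProperlyHomotopic n k (radialExt n k g) f := by
  have hesc := exists_forall_lt_norm_of_isCompact_preimage continuous_id hfp
  obtain ⟨S, hS⟩ := hesc 1
  set R := max S 1
  have hR : 0 < R := lt_max_of_lt_right one_pos
  have hfR : ∀ v, R ≤ ‖v‖ → 1 ≤ ‖f v‖ := fun v hv => (hS v ((le_max_left S 1).trans hv)).le
  have hne : ∀ x : sphere (0 : E) 1, f (R • (x : E)) ≠ 0 := fun x =>
    norm_pos_iff.1 (one_pos.trans_le (hfR _ (by simp [norm_smul, abs_of_pos hR])))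
  have hc : Continuous fun x : sphere (0 : E) 1 => f (R • (x : E)) := by fun_prop
  refine ⟨fun x => unitSphereProj _ (hne x), hc.unitSphereProj hne, ?_⟩
  have hrescale : ProperlyHomotopic n k f (homogeneousExt fun x => R⁻¹ • f (R • (x : E))) :=
    ⟨rescaleHomotopy f R, continuous_rescaleHomotopy hf hR,
      isCompact_preimage_of_forall_lt_norm (continuous_rescaleHomotopy hf hR)
        (exists_forall_lt_norm_rescaleHomotopy hR hfR hesc),
      rescaleHomotopy_zero f R, rescaleHomotopy_one f R⟩
  have hnormalize : ProperlyHomotopic n k (homogeneousExt fun x => R⁻¹ • f (R • (x : E)))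
      (homogeneousExt fun x => (unitSphereProj _ (hne x) : F)) :=
    properlyHomotopic_homogeneousExt_of_sameRay (by fun_prop)
      (continuous_subtype_val.comp (hc.unitSphereProj hne))
      (fun x => smul_ne_zero (inv_ne_zero hR.ne') (hne x))
      (fun x => ne_zero_of_mem_unit_sphere _)
      fun x => (SameRay.sameRay_nonneg_smul_left _ (inv_nonneg.2 hR.le)).nonneg_smul_right
        (inv_nonneg.2 (norm_nonneg _))
  rw [radialExt_eq_homogeneousExt]
  exact (hrescale.trans hnormalize).symm

end Euclidean

/-- The assignment `g ↦ Pg` induces a bijection from homotopy classes of maps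
`S^{n-1} → S^{k-1}` to proper homotopy classes of proper maps `ℝⁿ → ℝᵏ`:
it lands in proper maps, is well defined, injective and surjective on classes. -/
theorem stmt_11 (n k : ℕ) :
    (∀ g : Metric.sphere (0 : EuclideanSpace ℝ (Fin n)) 1 →
           Metric.sphere (0 : EuclideanSpace ℝ (Fin k)) 1, Continuous g →
      Continuous (radialExt n k g) ∧
        ∀ K : Set (EuclideanSpace ℝ (Fin k)), IsCompact K →
          IsCompact (radialExt n k g ⁻¹' K)) ∧
    (∀ g₀ g₁, Continuous g₀ → Continuous g₁ → SphereHomotopic n k g₀ g₁ →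
      ProperlyHomotopic n k (radialExt n k g₀) (radialExt n k g₁)) ∧
    (∀ g₀ g₁, Continuous g₀ → Continuous g₁ →
      ProperlyHomotopic n k (radialExt n k g₀) (radialExt n k g₁) →
      SphereHomotopic n k g₀ g₁) ∧
    (∀ f : EuclideanSpace ℝ (Fin n) → EuclideanSpace ℝ (Fin k), Continuous f →
      (∀ K : Set (EuclideanSpace ℝ (Fin k)), IsCompact K → IsCompact (f ⁻¹' K)) →
      ∃ g, Continuous g ∧ ProperlyHomotopic n k (radialExt n k g) f) := by
  exact ⟨fun g hg => ⟨continuous_radialExt hg, isCompact_preimage_radialExt hg⟩,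
    fun g₀ g₁ _ _ h => h.properlyHomotopic_radialExt,
    fun g₀ g₁ _ _ h => h.sphereHomotopic,
    fun f hf hfp => exists_radialExt_properlyHomotopic hf hfp⟩
end

section
/- The set of proper homotopy classes of proper continuous maps ℝ → ℝ has exactly four elements, represented by x, -x, |x|, and -|x|. -/
open Set Filter

/-- Proper homotopy of maps `ℝ → ℝ`. -/
def ProperlyHomotopicR (f₀ f₁ : ℝ → ℝ) : Prop :=
  ∃ H : unitInterval × ℝ → ℝ,
    Continuous H ∧ (∀ K : Set ℝ, IsCompact K → IsCompact (H ⁻¹' K)) ∧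
    (∀ x, H (0, x) = f₀ x) ∧ (∀ x, H (1, x) = f₁ x)

/-- The four representatives `x`, `-x`, `|x|`, `-|x|`. -/
def reps : Fin 4 → (ℝ → ℝ) :=
  ![fun x => x, fun x => -x, fun x => |x|, fun x => -|x|]

/-- A proper map escapes every bound. -/
lemma proper_escape {f : ℝ → ℝ}
    (hp : ∀ K : Set ℝ, IsCompact K → IsCompact (f ⁻¹' K)) (c : ℝ) :
    ∃ R : ℝ, 0 ≤ R ∧ ∀ x : ℝ, R < |x| → c < |f x| := by
  obtain ⟨r, hr⟩ := (hp (Icc (-|c|) |c|) isCompact_Icc).isBounded.subset_closedBall 0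
  refine ⟨max r 0, le_max_right _ _, fun x hx => ?_⟩
  have hx' : x ∉ f ⁻¹' Icc (-|c|) |c| := by
    intro hmem
    have := hr hmem
    simp only [Metric.mem_closedBall, Real.dist_eq, sub_zero] at this
    have : |x| ≤ max r 0 := le_trans this (le_max_left _ _)
    linarith
  have : ¬ |f x| ≤ |c| := by
    intro h; exact hx' (abs_le.mp h)
  calc c ≤ |c| := le_abs_self c
    _ < |f x| := lt_of_not_ge this

/-- Sign dichotomy at `+∞` for a proper continuous map. -/
lemma sign_top {f : ℝ → ℝ} (hc : Continuous f)
    (hp : ∀ K : Set ℝ, IsCompact K → IsCompact (f ⁻¹' K)) :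
    (∀ᶠ x in atTop, 0 < f x) ∨ (∀ᶠ x in atTop, f x < 0) := by
  obtain ⟨R, hR0, hR⟩ := proper_escape hp 0
  have hne : ∀ x, R < x → f x ≠ 0 := by
    intro x hx h
    have := hR x (by rw [abs_of_pos (lt_of_le_of_lt hR0 hx)]; exact hx)
    rw [h] at this; simp at this
  have key : ∀ a b, R < a → R < b → 0 < f a → 0 < f b ∨ True := fun _ _ _ _ _ => Or.inr trivial
  rcases lt_or_gt_of_ne (hne (R+1) (by linarith)) with hneg | hpos
  · right
    refine eventually_atTop.mpr ⟨R+1, fun x hx => ?_⟩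
    by_contra h
    push_neg at h
    have hfx : 0 < f x := lt_of_le_of_ne h (Ne.symm (hne x (by linarith)))
    have : (0:ℝ) ∈ uIcc (f (R+1)) (f x) := by
      rw [mem_uIcc]; left; constructor <;> linarith
    obtain ⟨y, hy, hfy⟩ := intermediate_value_uIcc (hc.continuousOn) this
    have hy' : R < y := by
      rcases mem_uIcc.mp hy with ⟨h1, _⟩ | ⟨h1, _⟩
      · linarith
      · rcases le_or_gt x (R+1) with h | h
        · linarith
        · linarith
    exact hne y hy' hfy
  · left
    refine eventually_atTop.mpr ⟨R+1, fun x hx => ?_⟩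
    by_contra h
    push_neg at h
    have hfx : f x < 0 := lt_of_le_of_ne h (hne x (by linarith))
    have : (0:ℝ) ∈ uIcc (f (R+1)) (f x) := by
      rw [mem_uIcc]; right; constructor <;> linarith
    obtain ⟨y, hy, hfy⟩ := intermediate_value_uIcc (hc.continuousOn) this
    have hy' : R < y := by
      rcases mem_uIcc.mp hy with ⟨h1, _⟩ | ⟨h1, _⟩
      · linarith
      · rcases le_or_gt x (R+1) with h | h
        · linarith
        · linarith
    exact hne y hy' hfy

/-- Sign dichotomy at `-∞` for a proper continuous map. -/
lemma sign_bot {f : ℝ → ℝ} (hc : Continuous f)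
    (hp : ∀ K : Set ℝ, IsCompact K → IsCompact (f ⁻¹' K)) :
    (∀ᶠ x in atBot, 0 < f x) ∨ (∀ᶠ x in atBot, f x < 0) := by
  have hc' : Continuous (fun x : ℝ => f (-x)) := hc.comp continuous_neg
  have hp' : ∀ K : Set ℝ, IsCompact K → IsCompact ((fun x : ℝ => f (-x)) ⁻¹' K) := by
    intro K hK
    have : (fun x : ℝ => f (-x)) ⁻¹' K = -(f ⁻¹' K) := by
      ext x; simp [Set.mem_neg]
    rw [this]
    exact (hp K hK).neg
  rcases sign_top hc' hp' with h | h
  · left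
    rw [eventually_atTop] at h
    obtain ⟨a, ha⟩ := h
    refine eventually_atBot.mpr ⟨-a, fun x hx => ?_⟩
    have := ha (-x) (by linarith)
    simpa using this
  · right
    rw [eventually_atTop] at h
    obtain ⟨a, ha⟩ := h
    refine eventually_atBot.mpr ⟨-a, fun x hx => ?_⟩
    have := ha (-x) (by linarith)
    simpa using this

/-- Constant sign of a proper homotopy on a neighbourhood of `+∞`. -/
lemma homotopy_sign_top {H : unitInterval × ℝ → ℝ} (hc : Continuous H)
    (hp : ∀ K : Set ℝ, IsCompact K → IsCompact (H ⁻¹' K)) :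
    ∃ R : ℝ, (∀ t x, R < x → 0 < H (t, x)) ∨ (∀ t x, R < x → H (t, x) < 0) := by
  have hK : IsCompact (H ⁻¹' {0}) := hp {0} isCompact_singleton
  obtain ⟨r, hr⟩ := (hK.image continuous_snd).isBounded.subset_closedBall 0
  refine ⟨r, ?_⟩
  have hne : ∀ p : unitInterval × ℝ, r < p.2 → H p ≠ 0 := by
    rintro ⟨t, x⟩ hx h
    have : x ∈ Prod.snd '' (H ⁻¹' {0}) := ⟨(t, x), by simpa using h, rfl⟩
    have := hr this
    simp only [Metric.mem_closedBall, Real.dist_eq, sub_zero] at this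
    have := le_abs_self x
    linarith
  have hconn : IsConnected ((univ : Set unitInterval) ×ˢ Ioi r) :=
    isConnected_univ.prod isConnected_Ioi
  have himg : IsPreconnected (H '' ((univ : Set unitInterval) ×ˢ Ioi r)) :=
    hconn.isPreconnected.image H hc.continuousOn
  have hsub : H '' ((univ : Set unitInterval) ×ˢ Ioi r) ⊆ Ioi 0 ∪ Iio 0 := by
    rintro y ⟨⟨t, x⟩, ⟨_, hx⟩, rfl⟩
    rcases lt_or_gt_of_ne (hne (t, x) hx) with h | h
    · right; exact h
    · left; exact h
  rcases himg.subset_or_subset isOpen_Ioi isOpen_Iio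
      (((Set.Iio_disjoint_Ici (le_refl (0:ℝ))).symm).mono_left Set.Ioi_subset_Ici_self) hsub with h | h
  · left; intro t x hx
    exact h ⟨(t, x), ⟨trivial, hx⟩, rfl⟩
  · right; intro t x hx
    exact h ⟨(t, x), ⟨trivial, hx⟩, rfl⟩

/-- Constant sign of a proper homotopy on a neighbourhood of `-∞`. -/
lemma homotopy_sign_bot {H : unitInterval × ℝ → ℝ} (hc : Continuous H)
    (hp : ∀ K : Set ℝ, IsCompact K → IsCompact (H ⁻¹' K)) :
    ∃ R : ℝ, (∀ t x, x < -R → 0 < H (t, x)) ∨ (∀ t x, x < -R → H (t, x) < 0) := by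
  have hK : IsCompact (H ⁻¹' {0}) := hp {0} isCompact_singleton
  obtain ⟨r, hr⟩ := (hK.image continuous_snd).isBounded.subset_closedBall 0
  refine ⟨r, ?_⟩
  have hne : ∀ p : unitInterval × ℝ, p.2 < -r → H p ≠ 0 := by
    rintro ⟨t, x⟩ hx h
    have : x ∈ Prod.snd '' (H ⁻¹' {0}) := ⟨(t, x), by simpa using h, rfl⟩
    have := hr this
    simp only [Metric.mem_closedBall, Real.dist_eq, sub_zero] at this
    have := neg_abs_le x
    linarith
  have hconn : IsConnected ((univ : Set unitInterval) ×ˢ Iio (-r)) :=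
    isConnected_univ.prod isConnected_Iio
  have himg : IsPreconnected (H '' ((univ : Set unitInterval) ×ˢ Iio (-r))) :=
    hconn.isPreconnected.image H hc.continuousOn
  have hsub : H '' ((univ : Set unitInterval) ×ˢ Iio (-r)) ⊆ Ioi 0 ∪ Iio 0 := by
    rintro y ⟨⟨t, x⟩, ⟨_, hx⟩, rfl⟩
    rcases lt_or_gt_of_ne (hne (t, x) hx) with h | h
    · right; exact h
    · left; exact h
  rcases himg.subset_or_subset isOpen_Ioi isOpen_Iio
      (((Set.Iio_disjoint_Ici (le_refl (0:ℝ))).symm).mono_left Set.Ioi_subset_Ici_self) hsub with h | h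
  · left; intro t x hx
    exact h ⟨(t, x), ⟨trivial, hx⟩, rfl⟩
  · right; intro t x hx
    exact h ⟨(t, x), ⟨trivial, hx⟩, rfl⟩

/-- The straight-line homotopy between two proper maps of the same end signs is proper. -/
lemma straight_line {f g : ℝ → ℝ} (hfc : Continuous f) (hgc : Continuous g)
    (hfp : ∀ K : Set ℝ, IsCompact K → IsCompact (f ⁻¹' K))
    (hgp : ∀ K : Set ℝ, IsCompact K → IsCompact (g ⁻¹' K))
    (htop : ∀ᶠ x in atTop, 0 < f x * g x)
    (hbot : ∀ᶠ x in atBot, 0 < f x * g x) :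
    ProperlyHomotopicR f g := by
  refine ⟨fun p => (1 - (p.1 : ℝ)) * f p.2 + (p.1 : ℝ) * g p.2, ?_, ?_, ?_, ?_⟩
  · fun_prop
  · intro K hK
    obtain ⟨c₀, hc₀⟩ := hK.isBounded.subset_closedBall 0
    set c := max c₀ 0 with hc
    have hKc : K ⊆ Metric.closedBall 0 c :=
      hc₀.trans (Metric.closedBall_subset_closedBall (le_max_left _ _))
    obtain ⟨Rf, _, hRf⟩ := proper_escape hfp c
    obtain ⟨Rg, _, hRg⟩ := proper_escape hgp c
    obtain ⟨a, ha⟩ := eventually_atTop.mp htop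
    obtain ⟨b, hb⟩ := eventually_atBot.mp hbot
    set R := max (max Rf Rg) (max |a| |b|) with hRdef
    have hbig : ∀ (t : unitInterval) (x : ℝ), R < |x| →
        c < |(1 - (t : ℝ)) * f x + (t : ℝ) * g x| := by
      intro t x hx
      have hf : c < |f x| := hRf x (lt_of_le_of_lt (le_trans (le_max_left Rf Rg) (le_max_left _ _)) hx)
      have hg : c < |g x| := hRg x (lt_of_le_of_lt (le_trans (le_max_right Rf Rg) (le_max_left _ _)) hx)
      have hsign : 0 < f x * g x := by
        rcases le_or_gt 0 x with hx0 | hx0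
        · have : a ≤ x := by
            have h1 : |a| ≤ R := le_trans (le_max_left _ _) (le_max_right _ _)
            have := le_abs_self a
            rw [abs_of_nonneg hx0] at hx
            linarith
          exact ha x this
        · have : x ≤ b := by
            have h1 : |b| ≤ R := le_trans (le_max_right _ _) (le_max_right _ _)
            have := neg_abs_le b
            rw [abs_of_neg hx0] at hx
            linarith
          exact hb x this
      have ht0 : (0:ℝ) ≤ t := t.2.1
      have ht1 : (t:ℝ) ≤ 1 := t.2.2
      have hcnn : (0:ℝ) ≤ c := le_max_right _ _
      rcases lt_trichotomy (f x) 0 with hfneg | hf0 | hfpos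
      · have hgneg : g x < 0 := by nlinarith
        have hfc' : f x < -c := by rw [abs_of_neg hfneg] at hf; linarith
        have hgc' : g x < -c := by rw [abs_of_neg hgneg] at hg; linarith
        have : (1 - (t:ℝ)) * f x + (t:ℝ) * g x < -c := by
          nlinarith [mul_nonneg (sub_nonneg.mpr ht1) (by linarith : (0:ℝ) ≤ -c - f x),
            mul_nonneg ht0 (by linarith : (0:ℝ) ≤ -c - g x)]
        rw [abs_of_neg (by linarith)]
        linarith
      · rw [hf0] at hf; simp at hf; linarith
      · have hgpos : 0 < g x := by nlinarith
        have hfc' : c < f x := by rwa [abs_of_pos hfpos] at hf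
        have hgc' : c < g x := by rwa [abs_of_pos hgpos] at hg
        have : c < (1 - (t:ℝ)) * f x + (t:ℝ) * g x := by
          nlinarith [mul_nonneg (sub_nonneg.mpr ht1) (by linarith : (0:ℝ) ≤ f x - c),
            mul_nonneg ht0 (by linarith : (0:ℝ) ≤ g x - c)]
        rw [abs_of_pos (by linarith)]
        linarith
    have hsubset : (fun p : unitInterval × ℝ => (1 - (p.1 : ℝ)) * f p.2 + (p.1 : ℝ) * g p.2) ⁻¹' K
        ⊆ (univ : Set unitInterval) ×ˢ Icc (-R) R := by
      rintro ⟨t, x⟩ hmem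
      refine ⟨trivial, ?_⟩
      by_contra hxR
      have hx : R < |x| := by
        simp only [mem_Icc, not_and_or, not_le] at hxR
        rcases hxR with h | h
        · rw [abs_of_neg (by
            have : (0:ℝ) ≤ R := le_trans (le_trans (abs_nonneg a) (le_max_left _ _)) (le_max_right _ _)
            linarith)]
          linarith
        · exact lt_of_lt_of_le h (le_abs_self x)
      have := hbig t x hx
      have hmem' := hKc hmem
      simp only [Metric.mem_closedBall, Real.dist_eq, sub_zero] at hmem'
      linarith
    refine IsCompact.of_isClosed_subset (isCompact_univ.prod isCompact_Icc)
      (IsClosed.preimage (by fun_prop) hK.isClosed) hsubset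
  · intro x; simp
  · intro x; simp

/-- The set of proper homotopy classes of proper maps `ℝ → ℝ` has exactly four
elements, represented by `x`, `-x`, `|x|`, `-|x|`. -/
theorem stmt_12 :
    (∀ i, Continuous (reps i) ∧
      ∀ K : Set ℝ, IsCompact K → IsCompact (reps i ⁻¹' K)) ∧
    (∀ i j, i ≠ j → ¬ ProperlyHomotopicR (reps i) (reps j)) ∧
    (∀ f : ℝ → ℝ, Continuous f →
      (∀ K : Set ℝ, IsCompact K → IsCompact (f ⁻¹' K)) →
      ∃ i, ProperlyHomotopicR f (reps i)) := by
  have habs : ∀ i x, |reps i x| = |x| := by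
    intro i x
    fin_cases i <;> simp [reps, abs_abs]
  have hcont : ∀ i, Continuous (reps i) := by
    intro i
    fin_cases i <;> simp [reps] <;> fun_prop
  have hproper : ∀ i, ∀ K : Set ℝ, IsCompact K → IsCompact (reps i ⁻¹' K) := by
    intro i K hK
    obtain ⟨r, hr⟩ := hK.isBounded.subset_closedBall 0
    refine IsCompact.of_isClosed_subset (isCompact_Icc (a := -r) (b := r))
      (IsClosed.preimage (hcont i) hK.isClosed) ?_
    intro x hx
    have := hr hx
    simp only [Metric.mem_closedBall, Real.dist_eq, sub_zero] at this
    rw [habs i x] at this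
    exact abs_le.mp this
  refine ⟨fun i => ⟨hcont i, hproper i⟩, ?_, ?_⟩
  · -- distinctness
    rintro i j hij ⟨H, hHc, hHp, h0, h1⟩
    obtain ⟨R, htop⟩ := homotopy_sign_top hHc hHp
    obtain ⟨R', hbot⟩ := homotopy_sign_bot hHc hHp
    set X : ℝ := max R 0 + 1 with hX
    set Y : ℝ := -(max R' 0 + 1) with hY
    have hXR : R < X := by rw [hX]; have := le_max_left R 0; linarith
    have hX0 : 0 < X := by rw [hX]; have := le_max_right R 0; linarith
    have hYR : Y < -R' := by rw [hY]; have := le_max_left R' 0; linarith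
    have hY0 : Y < 0 := by rw [hY]; have := le_max_right R' 0; linarith
    have hTop : (0 < reps i X ↔ 0 < reps j X) := by
      rcases htop with h | h
      · constructor <;> intro
        · rw [← h1 X]; exact h 1 X hXR
        · rw [← h0 X]; exact h 0 X hXR
      · constructor <;> intro hpos
        · exfalso; have := h 0 X hXR; rw [h0 X] at this; linarith
        · exfalso; have := h 1 X hXR; rw [h1 X] at this; linarith
    have hBot : (0 < reps i Y ↔ 0 < reps j Y) := by
      rcases hbot with h | h
      · constructor <;> intro
        · rw [← h1 Y]; exact h 1 Y hYR
        · rw [← h0 Y]; exact h 0 Y hYR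
      · constructor <;> intro hpos
        · exfalso; have := h 0 Y hYR; rw [h0 Y] at this; linarith
        · exfalso; have := h 1 Y hYR; rw [h1 Y] at this; linarith
    clear h0 h1 hHc hHp htop hbot
    fin_cases i <;> fin_cases j <;>
      first
        | exact hij rfl
        | (simp [reps, abs_of_pos hX0, abs_of_neg hY0] at hTop hBot
           first
             | exact absurd (hTop.mp (by linarith)) (by linarith)
             | exact absurd (hTop.mpr (by linarith)) (by linarith)
             | exact absurd (hBot.mp (by linarith)) (by linarith)
             | exact absurd (hBot.mpr (by linarith)) (by linarith))
  · -- classification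
    intro f hfc hfp
    have r0 : ∀ x : ℝ, reps 0 x = x := fun _ => rfl
    have r1 : ∀ x : ℝ, reps 1 x = -x := fun _ => rfl
    have r2 : ∀ x : ℝ, reps 2 x = |x| := fun _ => rfl
    have r3 : ∀ x : ℝ, reps 3 x = -|x| := fun _ => rfl
    rcases sign_top hfc hfp with ht | ht <;> rcases sign_bot hfc hfp with hb | hb
    · -- (+,+) : |x|
      refine ⟨2, straight_line hfc (hcont 2) hfp (hproper 2) ?_ ?_⟩
      · filter_upwards [ht, eventually_gt_atTop 0] with x hx hx0
        rw [r2, abs_of_pos hx0]; exact mul_pos hx hx0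
      · filter_upwards [hb, eventually_lt_atBot 0] with x hx hx0
        rw [r2, abs_of_neg hx0]; exact mul_pos hx (by linarith)
    · -- (+,-) : x
      refine ⟨0, straight_line hfc (hcont 0) hfp (hproper 0) ?_ ?_⟩
      · filter_upwards [ht, eventually_gt_atTop 0] with x hx hx0
        rw [r0]; exact mul_pos hx hx0
      · filter_upwards [hb, eventually_lt_atBot 0] with x hx hx0
        rw [r0]; exact mul_pos_of_neg_of_neg hx hx0
    · -- (-,+) : -x
      refine ⟨1, straight_line hfc (hcont 1) hfp (hproper 1) ?_ ?_⟩
      · filter_upwards [ht, eventually_gt_atTop 0] with x hx hx0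
        rw [r1]; exact mul_pos_of_neg_of_neg hx (by linarith)
      · filter_upwards [hb, eventually_lt_atBot 0] with x hx hx0
        rw [r1]; exact mul_pos hx (by linarith)
    · -- (-,-) : -|x|
      refine ⟨3, straight_line hfc (hcont 3) hfp (hproper 3) ?_ ?_⟩
      · filter_upwards [ht, eventually_gt_atTop 0] with x hx hx0
        rw [r3, abs_of_pos hx0]; exact mul_pos_of_neg_of_neg hx (by linarith)
      · filter_upwards [hb, eventually_lt_atBot 0] with x hx hx0
        rw [r3, abs_of_neg hx0, neg_neg]; exact mul_pos_of_neg_of_neg hx hx0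
end

section
/- The smooth function f : (0,∞) → ℝ given by f(x) = 1/(x(2 + sin x)) has a set of regular values that is not open in ℝ. -/
/-!
The value `0` is regular because `f > 0` never attains it. But `f'` vanishes wherever
`2 + sin x + x cos x = 0`, and by the intermediate value theorem this happens in every interval
`[2πn, 2πn + π]`, where the expression changes sign from `2 + 2πn` to `2 - (2πn + π)`.
Since `f x ≤ 1 / x`, the corresponding critical values tend to `0`, so no neighbourhood of `0`
consists of regular values.
-/

open Real Filter Topology

lemma two_add_sin_pos (x : ℝ) : 0 < 2 + sin x := by
  linarith [neg_one_le_sin x]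

lemma hasDerivAt_mul_two_add_sin (x : ℝ) :
    HasDerivAt (fun z => z * (2 + sin z)) (2 + sin x + x * cos x) x :=
  ((hasDerivAt_id' x).mul ((hasDerivAt_sin x).const_add 2)).congr_deriv (by ring)

lemma deriv_inv_mul_two_add_sin_eq_zero {x : ℝ} (hx : 0 < x)
    (hcrit : 2 + sin x + x * cos x = 0) :
    deriv (fun z => (z * (2 + sin z))⁻¹) x = 0 := by
  have hden : x * (2 + sin x) ≠ 0 := (mul_pos hx (two_add_sin_pos x)).ne'
  exact ((hasDerivAt_mul_two_add_sin x).inv hden).deriv.trans (by rw [hcrit]; simp)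

lemma exists_ge_two_add_sin_add_mul_cos_eq_zero (A : ℝ) :
    ∃ x ≥ A, 2 + sin x + x * cos x = 0 := by
  obtain ⟨n, hn⟩ := exists_nat_ge A
  set a : ℝ := n * (2 * π)
  have ha : (n : ℝ) ≤ a := le_mul_of_one_le_right n.cast_nonneg (by linarith [pi_gt_three])
  have hsin : sin a = 0 := by rw [sin_periodic.nat_mul_eq, sin_zero]
  have hcos : cos a = 1 := by rw [cos_periodic.nat_mul_eq, cos_zero]
  have hcont : ContinuousOn (fun z => 2 + sin z + z * cos z) (Set.Icc a (a + π)) := by fun_prop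
  have hsign : (0 : ℝ) ∈
      Set.Icc (2 + sin (a + π) + (a + π) * cos (a + π)) (2 + sin a + a * cos a) := by
    rw [sin_add_pi, cos_add_pi, hsin, hcos]
    constructor <;> linarith [pi_gt_three, n.cast_nonneg (α := ℝ)]
  obtain ⟨x, hx, hcrit⟩ := intermediate_value_Icc' (by linarith [pi_pos]) hcont hsign
  exact ⟨x, by linarith [hx.1], hcrit⟩

lemma tendsto_inv_mul_two_add_sin_atTop :
    Tendsto (fun x => (x * (2 + sin x))⁻¹) atTop (𝓝 0) := by
  refine tendsto_inv_atTop_zero.comp (tendsto_atTop_mono' _ ?_ tendsto_id)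
  filter_upwards [eventually_ge_atTop 0] with x hx
  show x ≤ x * (2 + sin x)
  nlinarith [neg_one_le_sin x]

/-- The set of regular values of `f(x) = 1/(x(2+sin x))` on `(0,∞)` is not open. -/
theorem stmt_16 :
    ¬ IsOpen {y : ℝ | ∀ x ∈ Set.Ioi (0:ℝ),
        (x * (2 + Real.sin x))⁻¹ = y →
          deriv (fun z : ℝ => (z * (2 + Real.sin z))⁻¹) x ≠ 0} := by
  intro hopen
  have hregular_near_zero := hopen.mem_nhds (x := 0)
    fun x hx hfx => absurd hfx (inv_pos.2 (mul_pos hx (two_add_sin_pos x))).ne'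
  have hcrit : ∃ᶠ x in atTop, 0 < x ∧ 2 + sin x + x * cos x = 0 :=
    (eventually_gt_atTop 0).and_frequently
      (frequently_atTop.2 exists_ge_two_add_sin_add_mul_cos_eq_zero)
  obtain ⟨x, ⟨hx, hxcrit⟩, hregular⟩ := (hcrit.and_eventually
    (tendsto_inv_mul_two_add_sin_atTop.eventually hregular_near_zero)).exists
  exact hregular x hx rfl (deriv_inv_mul_two_add_sin_eq_zero hx hxcrit)
end
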